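/- Classical bar induction for decidable bars: let ρ : List ℕ → ℕ and suppose (1) for every α : ℕ → ℕ there exists n with ρ (initial segment of α of length n) = 0; (2) A w holds whenever ρ w = 0; (3) for every finite sequence w, if A (w ++ [n]) holds for all n : ℕ, then A w holds. Then A [] holds. (Provable with classical logic and dependent choice.) -/

import Mathlib

/-!
If `A []` failed, then by (3) every sequence outside `A` has a one-step extension outside `A`,
so dependent choice yields a branch `α` all of whose initial segments lie outside `A`.
By (1) some initial segment of `α` is in the bar, hence in `A` by (2): a contradiction.
-/

/-- The initial segment `[α 0, ..., α (n-1)]` of `α` of length `n`. -/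
def seg (α : ℕ → ℕ) (n : ℕ) : List ℕ := (List.range n).map α

lemma seg_succ (α : ℕ → ℕ) (n : ℕ) : seg α (n + 1) = seg α n ++ [α n] := by
  simp [seg, List.range_succ]

theorem exists_forall_seg_of_forall_exists_append {P : List ℕ → Prop} (h₀ : P [])
    (hstep : ∀ w, P w → ∃ n, P (w ++ [n])) : ∃ α : ℕ → ℕ, ∀ n, P (seg α n) := by
  choose! g hg using hstep
  set branch : ℕ → List ℕ := fun n => (fun w => w ++ [g w])^[n] []
  have hbranch : ∀ n, branch (n + 1) = branch n ++ [g (branch n)] := fun n =>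
    Function.iterate_succ_apply' _ n []
  have hseg : ∀ n, seg (fun n => g (branch n)) n = branch n := by
    intro n
    induction n with
    | zero => rfl
    | succ n ih => rw [seg_succ, ih, hbranch]
  refine ⟨fun n => g (branch n), fun n => hseg n ▸ ?_⟩
  induction n with
  | zero => exact h₀
  | succ n ih => exact hbranch n ▸ hg _ ih

/-- Classical bar induction for decidable bars `ρ`. -/
theorem bar_induction (ρ : List ℕ → ℕ) (A : List ℕ → Prop)
    (hbar : ∀ α : ℕ → ℕ, ∃ n, ρ (seg α n) = 0)
    (hbase : ∀ w, ρ w = 0 → A w)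
    (hind : ∀ w, (∀ n : ℕ, A (w ++ [n])) → A w) :
    A [] := by
  by_contra h
  obtain ⟨α, hα⟩ := exists_forall_seg_of_forall_exists_append h
    fun w hw => not_forall.mp (mt (hind w) hw)
  obtain ⟨n, hn⟩ := hbar α
  exact hα n (hbase _ hn)
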